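/- arXiv:1303.5569 — 2 statements merged into one kernel-verified Lean document; each statement's English description precedes it below -/
import Mathlib

section
/- Suppose a sequence graph is connected (any two vertices are joined by a finite walk along edges) and every vertex is an endpoint of at least one segment edge and at least one bond edge. Then every integer flow on the graph can be written as a finite sum of alternating flows of even-length cycle traversals. -/
open scoped Classical
open Finset

noncomputable section

/-- A sequence graph: finite multigraph whose edges are split into segment
edges (`seg`) and bond edges, each segment edge having two distinct endpoints. -/
structure SeqGraph (V E : Type) where
  ends : E → Sym2 V
  seg : E → Prop
  seg_not_diag : ∀ x : E, seg x → ¬ (ends x).IsDiag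

namespace SeqGraph

variable {V E : Type} [Fintype V] [Fintype E]

/-- Incidence multiplicity of vertex `u` on edge `x`. -/
def mult (G : SeqGraph V E) (u : V) (x : E) : ℤ :=
  if G.ends x = s(u, u) then 2 else if u ∈ G.ends x then 1 else 0

/-- The balance condition: at each vertex the total weight of segment-edge
incidences equals the total weight of bond-edge incidences. -/
def IsFlow (G : SeqGraph V E) (f : E → ℤ) : Prop :=
  ∀ u : V,
    (∑ x : E, if G.seg x then G.mult u x * f x else 0) =
      ∑ x : E, if G.seg x then 0 else G.mult u x * f x

/-- ℓ¹ norm of an integer weighting. -/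
def l1 (f : E → ℤ) : ℤ := ∑ x : E, |f x|

/-- A (nonzero) integer flow is minimal if it admits no nontrivial ℓ¹-additive
decomposition into nonzero integer flows. -/
def MinimalFlow (G : SeqGraph V E) (f : E → ℤ) : Prop :=
  ¬ ∃ f₁ f₂ : E → ℤ, G.IsFlow f₁ ∧ G.IsFlow f₂ ∧ f₁ ≠ 0 ∧ f₂ ≠ 0 ∧
      f = f₁ + f₂ ∧ l1 f = l1 f₁ + l1 f₂

/-- A cycle traversal of length `L ≥ 1`. -/
structure CycleTraversal (G : SeqGraph V E) where
  L : ℕ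
  pos : L ≠ 0
  e : ZMod L → E
  v : ZMod L → V
  compat : ∀ i : ZMod L, G.ends (e i) = s(v (i - 1), v i)

variable {G : SeqGraph V E}

/-- Number of indices at which the traversal uses edge `x`. -/
def CycleTraversal.threadCount (t : G.CycleTraversal) (x : E) : ℕ :=
  haveI : NeZero t.L := ⟨t.pos⟩
  (Finset.univ.filter fun i : ZMod t.L => t.e i = x).card

/-- The thread flow of a traversal. -/
def CycleTraversal.threadFlow (t : G.CycleTraversal) : E → ℤ :=
  fun x => (t.threadCount x : ℤ)

/-- A sequence traversal: even length, alternating between segment edges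
(at even indices) and bond edges (at odd indices). -/
def CycleTraversal.IsSeqTraversal (t : G.CycleTraversal) : Prop :=
  Even t.L ∧ ∀ i : ZMod t.L, G.seg (t.e i) ↔ Even i.val

/-- Alternating weighting `∑ i, (-1)^i δ_{e i}` of an (even-length) traversal. -/
def CycleTraversal.altWeight (t : G.CycleTraversal) : E → ℤ :=
  haveI : NeZero t.L := ⟨t.pos⟩
  fun x => ∑ i : ZMod t.L, if t.e i = x then (-1 : ℤ) ^ i.val else 0

/-- Conjugate weighting: keep the value on segment edges, negate on bonds. -/
def conj (G : SeqGraph V E) (g : E → ℤ) : E → ℤ :=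
  fun x => if G.seg x then g x else -g x

/-- Alternating flow: the conjugate of the alternating weighting. -/
def CycleTraversal.altFlow (t : G.CycleTraversal) : E → ℤ :=
  G.conj t.altWeight

/-- Tight: equal edges only appear at indices of equal parity. -/
def CycleTraversal.Tight (t : G.CycleTraversal) : Prop :=
  ∀ i j : ZMod t.L, t.e i = t.e j → i.val % 2 = j.val % 2

/-- Synchronized: coinciding (distinct, same end vertex) indices differ by an
odd integer. -/
def CycleTraversal.Synchronized (t : G.CycleTraversal) : Prop :=
  ∀ i j : ZMod t.L, i ≠ j → t.v i = t.v j → Odd ((i.val : ℤ) - (j.val : ℤ))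

/-- Nested: no interleaved pairs of coinciding indices. -/
def CycleTraversal.Nested (t : G.CycleTraversal) : Prop :=
  ¬ ∃ i₁ i₂ j₁ j₂ : ZMod t.L,
      i₁.val < i₂.val ∧ i₂.val < j₁.val ∧ j₁.val < j₂.val ∧
      t.v i₁ = t.v j₁ ∧ t.v i₂ = t.v j₂

/-- Connectivity: any two vertices are joined by a finite walk along edges. -/
def Connected (G : SeqGraph V E) : Prop :=
  ∀ a b : V, ∃ (n : ℕ) (p : Fin (n + 1) → V), p 0 = a ∧ p (Fin.last n) = b ∧
    ∀ i : Fin n, ∃ x : E, G.ends x = s(p i.castSucc, p i.succ)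

end SeqGraph

/-!
Conjugation turns the flow condition for `f` into `∑ₓ m(u,x) g(x) = 0` at every vertex `u`,
for `g = f̂`. Given such a nonzero `g`, walk greedily along edges on which `g` is alternately
positive and negative, using each edge `x` at most `|g x|` times. At every vertex the positive and
negative incidences of `g` cancel, so the walk can always be continued unless it is back at its
start after an even number of steps; as its length is at most `‖g‖₁`, it does close up. The
alternating weighting of this closed walk agrees in sign with `g` edge by edge, so subtracting it
keeps `g` balanced and lowers `‖g‖₁` by the length of the walk, and induction on `‖g‖₁` finishes.
-/

namespace SeqGraph

variable {V E : Type} {G : SeqGraph V E}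

lemma conj_conj (g : E → ℤ) : G.conj (G.conj g) = g := by
  funext x
  unfold conj
  split_ifs <;> simp

lemma conj_sum {n : ℕ} (w : Fin n → E → ℤ) : G.conj (∑ k, w k) = ∑ k, G.conj (w k) := by
  funext x
  simp only [conj, Finset.sum_apply]
  split_ifs <;> simp

lemma mult_eq_of_ends_eq {u a b : V} {x : E} (h : G.ends x = s(a, b)) :
    G.mult u x = (if u = a then 1 else 0) + (if u = b then 1 else 0) := by
  unfold mult
  rw [h]
  by_cases ha : u = a <;> by_cases hb : u = b <;>
    simp [ha, hb, Sym2.mem_iff] <;> aesop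

lemma mult_nonneg (u : V) (x : E) : 0 ≤ G.mult u x := by
  unfold mult
  split_ifs <;> norm_num

lemma mult_pos_iff {u : V} {x : E} : 0 < G.mult u x ↔ u ∈ G.ends x := by
  unfold mult
  split_ifs with h₁ h₂ <;> simp_all

lemma neg_one_pow_eq_sign {j : ℕ} {c : ℤ} (h : 0 < (-1 : ℤ) ^ j * c) : (-1 : ℤ) ^ j = c.sign := by
  rcases neg_one_pow_eq_or ℤ j with hj | hj <;> rw [hj] at h ⊢
  · exact (Int.sign_eq_one_of_pos (by linarith)).symm
  · exact (Int.sign_eq_neg_one_of_neg (by linarith)).symm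

lemma pos_of_mul_sub_sign_mul_pos {s a c : ℤ} (hs : s = 1 ∨ s = -1) (hc : c ≤ |a|)
    (h : 0 < s * (a - a.sign * c)) : 0 < s * a ∧ c < |a| := by
  rcases lt_trichotomy a 0 with ha | rfl | ha
  · rw [Int.sign_eq_neg_one_of_neg ha, abs_of_neg ha] at *
    rcases hs with rfl | rfl <;> constructor <;> linarith
  · simp at h
  · rw [Int.sign_eq_one_of_pos ha, abs_of_pos ha] at *
    rcases hs with rfl | rfl <;> constructor <;> linarith

section Walk

variable (e : ℕ → E) (k : ℕ)

def walkCount (x : E) : ℤ := ∑ j ∈ range k, if e j = x then 1 else 0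

def walkAltWeight (x : E) : ℤ := ∑ j ∈ range k, if e j = x then (-1) ^ j else 0

lemma walkCount_update_succ (x y : E) :
    walkCount (Function.update e k x) (k + 1) y = walkCount e k y + if x = y then 1 else 0 := by
  rw [walkCount, sum_range_succ, Function.update_self]
  congr 1
  refine Finset.sum_congr rfl fun j hj => ?_
  rw [Function.update_of_ne (mem_range.mp hj).ne]

lemma walkAltWeight_eq_sign_mul_walkCount {g : E → ℤ}
    (hsign : ∀ j < k, 0 < (-1) ^ j * g (e j)) (x : E) :
    walkAltWeight e k x = (g x).sign * walkCount e k x := by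
  rw [walkCount, Finset.mul_sum]
  refine Finset.sum_congr rfl fun j hj => ?_
  split_ifs with h
  · subst h
    rw [mul_one]
    exact neg_one_pow_eq_sign (hsign j (mem_range.mp hj))
  · simp

lemma sum_neg_one_pow_mul_mult {v : ℕ → V} (hcompat : ∀ j < k, G.ends (e j) = s(v j, v (j + 1)))
    (u : V) : ∑ j ∈ range k, (-1) ^ j * G.mult u (e j) =
      (if u = v 0 then 1 else 0) - (-1) ^ k * (if u = v k then 1 else 0) := by
  set δ : ℕ → ℤ := fun j => (-1) ^ j * if u = v j then 1 else 0
  have hδ : ∀ j ∈ range k, (-1) ^ j * G.mult u (e j) = δ j - δ (j + 1) := by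
    intro j hj
    simp only [δ, mult_eq_of_ends_eq (hcompat j (mem_range.mp hj)), pow_succ]
    ring
  rw [Finset.sum_congr rfl hδ, Finset.sum_range_sub']
  simp [δ]

end Walk

/-- A walk `v 0, e 0, v 1, …, e (k - 1), v k` in the multigraph with `|g x|` parallel copies of
each edge `x`, using alternately edges on which `g` is positive and negative. -/
structure IsAltWalk (G : SeqGraph V E) (g : E → ℤ) (k : ℕ) (e : ℕ → E) (v : ℕ → V) : Prop where
  compat : ∀ j < k, G.ends (e j) = s(v j, v (j + 1))
  sign_pos : ∀ j < k, 0 < (-1) ^ j * g (e j)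
  count_le : ∀ x, walkCount e k x ≤ |g x|

namespace IsAltWalk

variable {g : E → ℤ} {k : ℕ} {e : ℕ → E} {v : ℕ → V}

lemma abs_sub_walkAltWeight (hw : G.IsAltWalk g k e v) (x : E) :
    |g x - walkAltWeight e k x| = |g x| - walkCount e k x := by
  have hle := hw.count_le x
  have hnn : 0 ≤ walkCount e k x := Finset.sum_nonneg fun j _ => by split_ifs <;> norm_num
  rw [walkAltWeight_eq_sign_mul_walkCount e k hw.sign_pos]
  rcases lt_trichotomy (g x) 0 with h | h | h
  · rw [Int.sign_eq_neg_one_of_neg h, abs_of_neg h] at *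
    rw [abs_of_nonpos (by linarith)]
    ring
  · rw [h, abs_zero] at hle ⊢
    simp [le_antisymm hle hnn]
  · rw [Int.sign_eq_one_of_pos h, abs_of_pos h] at *
    rw [abs_of_nonneg (by linarith)]
    ring

end IsAltWalk

def CycleTraversal.ofClosedWalk (n : ℕ) (e : ℕ → E) (v : ℕ → V)
    (hcompat : ∀ j < n + 1, G.ends (e j) = s(v j, v (j + 1))) (hclosed : v (n + 1) = v 0) :
    G.CycleTraversal where
  L := n + 1
  pos := n.succ_ne_zero
  e i := e i.val
  v i := v (i.val + 1)
  compat i := by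
    rcases eq_or_ne i 0 with rfl | hi
    · rw [zero_sub, ZMod.val_neg_one, hclosed]
      exact hcompat 0 n.succ_pos
    · have hsub : (i - 1).val = i.val - 1 := Fin.val_sub_one_of_ne_zero (n := n + 1) hi
      have hpos : i.val ≠ 0 := (ZMod.val_ne_zero i).mpr hi
      rw [hsub, Nat.sub_add_cancel (Nat.one_le_iff_ne_zero.mpr hpos)]
      exact hcompat i.val i.val_lt

lemma CycleTraversal.altWeight_ofClosedWalk (n : ℕ) (e : ℕ → E) (v : ℕ → V)
    (hcompat : ∀ j < n + 1, G.ends (e j) = s(v j, v (j + 1))) (hclosed : v (n + 1) = v 0) :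
    (ofClosedWalk n e v hcompat hclosed).altWeight = walkAltWeight e (n + 1) := by
  funext x
  -- `ZMod (n + 1)` is `Fin (n + 1)` by definition
  exact Fin.sum_univ_eq_sum_range (fun j => if e j = x then (-1 : ℤ) ^ j else 0) (n + 1)

variable [Fintype E]

/-- `g` lies in the kernel of the unsigned incidence matrix of `G`. -/
def IsBalanced (G : SeqGraph V E) (g : E → ℤ) : Prop :=
  ∀ u : V, ∑ x : E, G.mult u x * g x = 0

lemma IsFlow.isBalanced_conj {f : E → ℤ} (hf : G.IsFlow f) : G.IsBalanced (G.conj f) := by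
  intro u
  have h : ∀ x, G.mult u x * G.conj f x = (if G.seg x then G.mult u x * f x else 0) -
      (if G.seg x then 0 else G.mult u x * f x) := by
    intro x
    unfold conj
    split_ifs <;> ring
  simp only [h, Finset.sum_sub_distrib, hf u, sub_self]

lemma IsBalanced.exists_pos {g : E → ℤ} (hg : G.IsBalanced g) (hne : g ≠ 0) :
    ∃ x, 0 < g x := by
  obtain ⟨y, hy⟩ := Function.ne_iff.mp hne
  obtain ⟨⟨a, b⟩, hab⟩ := Quot.exists_rep (G.ends y)
  have hmem : a ∈ G.ends y := by rw [← hab]; exact Sym2.mem_mk_left a b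
  obtain ⟨x, -, hx⟩ := Finset.exists_pos_of_sum_zero_of_exists_nonzero _ (hg a)
    ⟨y, mem_univ y, mul_ne_zero (mult_pos_iff.mpr hmem).ne' hy⟩
  exact ⟨x, pos_of_mul_pos_right hx (mult_nonneg a x)⟩

lemma sum_walkCount (e : ℕ → E) (k : ℕ) : ∑ x, walkCount e k x = k := by
  simp only [walkCount]
  rw [Finset.sum_comm]
  simp

lemma sum_mul_walkAltWeight (e : ℕ → E) (k : ℕ) (φ : E → ℤ) :
    ∑ x, φ x * walkAltWeight e k x = ∑ j ∈ range k, (-1) ^ j * φ (e j) := by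
  simp [walkAltWeight, Finset.mul_sum, Finset.sum_comm (s := univ), mul_comm]

namespace IsAltWalk

variable {g : E → ℤ} {k : ℕ} {e : ℕ → E} {v : ℕ → V}

lemma le_l1 (hw : G.IsAltWalk g k e v) : (k : ℤ) ≤ l1 g := by
  rw [← sum_walkCount e k]
  exact Finset.sum_le_sum fun x _ => hw.count_le x

lemma l1_sub_walkAltWeight (hw : G.IsAltWalk g k e v) :
    l1 (g - walkAltWeight e k) = l1 g - k := by
  simp only [l1, Pi.sub_apply, hw.abs_sub_walkAltWeight, Finset.sum_sub_distrib, sum_walkCount]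

lemma sum_mult_mul_sub_walkAltWeight (hg : G.IsBalanced g) (hw : G.IsAltWalk g k e v) (u : V) :
    ∑ x, G.mult u x * (g - walkAltWeight e k) x =
      (-1) ^ k * (if u = v k then 1 else 0) - (if u = v 0 then 1 else 0) := by
  simp only [Pi.sub_apply, mul_sub, Finset.sum_sub_distrib, hg u, sum_mul_walkAltWeight,
    sum_neg_one_pow_mul_mult e k hw.compat]
  ring

/-- Balance at `v k` leaves an unused edge of the right sign there, unless the walk has closed
up with even length. -/
lemma exists_next_edge (hg : G.IsBalanced g) (hw : G.IsAltWalk g k e v)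
    (hopen : ¬ (v k = v 0 ∧ Even k)) :
    ∃ x, 0 < (-1) ^ k * g x ∧ v k ∈ G.ends x ∧ walkCount e k x < |g x| := by
  have hpos : ∑ _x : E, (0 : ℤ) < ∑ x, G.mult (v k) x * ((-1) ^ k * (g - walkAltWeight e k) x) := by
    simp only [Finset.sum_const_zero, mul_left_comm _ ((-1 : ℤ) ^ k), ← Finset.mul_sum,
      hw.sum_mult_mul_sub_walkAltWeight hg]
    by_cases hv : v k = v 0
    · rcases Nat.even_or_odd k with hk | hk
      · exact absurd ⟨hv, hk⟩ hopen
      · simp [hv, hk.neg_one_pow]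
    · simp [hv, ← pow_add, ← two_mul]
  obtain ⟨x, -, hx⟩ := Finset.exists_lt_of_sum_lt hpos
  have hr := pos_of_mul_pos_right hx (mult_nonneg _ _)
  have hmem := mult_pos_iff.mp (pos_of_mul_pos_left hx hr.le)
  rw [Pi.sub_apply, walkAltWeight_eq_sign_mul_walkCount e k hw.sign_pos] at hr
  obtain ⟨hsign, hcount⟩ :=
    pos_of_mul_sub_sign_mul_pos (neg_one_pow_eq_or ℤ k) (hw.count_le x) hr
  exact ⟨x, hsign, hmem, hcount⟩

lemma exists_extend (hg : G.IsBalanced g) (hw : G.IsAltWalk g k e v)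
    (hopen : ¬ (v k = v 0 ∧ Even k)) : ∃ e' v', G.IsAltWalk g (k + 1) e' v' := by
  obtain ⟨x, hsign, hmem, hcount⟩ := hw.exists_next_edge hg hopen
  obtain ⟨b, hb⟩ := Sym2.mem_iff_exists.mp hmem
  refine ⟨Function.update e k x, Function.update v (k + 1) b, ⟨?_, ?_, ?_⟩⟩
  · intro j hj
    rcases Nat.lt_succ_iff_lt_or_eq.mp hj with hj | rfl
    · rw [Function.update_of_ne hj.ne, Function.update_of_ne (by omega),
        Function.update_of_ne (by omega)]
      exact hw.compat j hj
    · rwa [Function.update_self, Function.update_self, Function.update_of_ne (by omega)]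
  · intro j hj
    rcases Nat.lt_succ_iff_lt_or_eq.mp hj with hj | rfl
    · rw [Function.update_of_ne hj.ne]
      exact hw.sign_pos j hj
    · rwa [Function.update_self]
  · intro y
    rw [walkCount_update_succ]
    split_ifs with h
    · subst h
      omega
    · simpa using hw.count_le y

end IsAltWalk

lemma IsBalanced.exists_isAltWalk_one {g : E → ℤ} (hg : G.IsBalanced g) (hne : g ≠ 0) :
    ∃ e v, G.IsAltWalk g 1 e v := by
  obtain ⟨x, hx⟩ := hg.exists_pos hne
  obtain ⟨⟨a, b⟩, hab⟩ := Quot.exists_rep (G.ends x)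
  refine ⟨fun _ => x, fun j => if j = 0 then a else b, ⟨?_, ?_, ?_⟩⟩
  · intro j hj
    obtain rfl : j = 0 := by omega
    exact hab.symm
  · intro j hj
    obtain rfl : j = 0 := by omega
    simpa using hx
  · intro y
    simp only [walkCount, range_one, sum_singleton]
    split_ifs with h
    · subst h
      rw [abs_of_pos hx]
      omega
    · exact abs_nonneg _

/-- The longest alternating walk is closed, of even length. -/
lemma IsBalanced.exists_closed_isAltWalk {g : E → ℤ} (hg : G.IsBalanced g) (hne : g ≠ 0) :
    ∃ n e v, G.IsAltWalk g (n + 1) e v ∧ Even (n + 1) ∧ v (n + 1) = v 0 := by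
  by_contra! hopen
  have hall : ∀ k, 1 ≤ k → ∃ e v, G.IsAltWalk g k e v := by
    intro k hk
    induction k, hk using Nat.le_induction with
    | base => exact hg.exists_isAltWalk_one hne
    | succ k hk ih =>
      obtain ⟨e, v, hw⟩ := ih
      obtain ⟨n, rfl⟩ := Nat.exists_eq_add_of_le' hk
      exact hw.exists_extend hg fun h => hopen n e v hw h.2 h.1
  obtain ⟨e, v, hw⟩ := hall ((l1 g).toNat + 1) (by omega)
  have := hw.le_l1
  omega

lemma IsBalanced.exists_traversal_l1_sub_lt {g : E → ℤ} (hg : G.IsBalanced g) (hne : g ≠ 0) :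
    ∃ t : G.CycleTraversal, Even t.L ∧ G.IsBalanced (g - t.altWeight) ∧
      l1 (g - t.altWeight) < l1 g := by
  obtain ⟨n, e, v, hw, heven, hclosed⟩ := hg.exists_closed_isAltWalk hne
  refine ⟨.ofClosedWalk n e v hw.compat hclosed, heven, ?_, ?_⟩ <;>
    rw [CycleTraversal.altWeight_ofClosedWalk]
  · intro u
    rw [hw.sum_mult_mul_sub_walkAltWeight hg, hclosed, heven.neg_one_pow, one_mul, sub_self]
  · rw [hw.l1_sub_walkAltWeight]
    omega

lemma l1_nonneg (g : E → ℤ) : 0 ≤ l1 g := Finset.sum_nonneg fun _ _ => abs_nonneg _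

theorem IsBalanced.exists_sum_altWeight {g : E → ℤ} (hg : G.IsBalanced g) :
    ∃ (n : ℕ) (T : Fin n → G.CycleTraversal), (∀ k, Even (T k).L) ∧
      g = ∑ k, (T k).altWeight := by
  induction hN : (l1 g).toNat using Nat.strong_induction_on generalizing g with
  | _ N ih =>
  rcases eq_or_ne g 0 with rfl | hne
  · exact ⟨0, Fin.elim0, fun k => k.elim0, by simp⟩
  obtain ⟨t, ht, hbal, hlt⟩ := hg.exists_traversal_l1_sub_lt hne
  have := l1_nonneg (g - t.altWeight)
  obtain ⟨n, T, hT, hsum⟩ := ih _ (by omega) hbal rfl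
  refine ⟨n + 1, Fin.cons t T, Fin.cases ht hT, ?_⟩
  rw [Fin.sum_univ_succ, Fin.cons_zero]
  simp only [Fin.cons_succ, ← hsum]
  abel

end SeqGraph

theorem stmt_8_general (V E : Type) [Fintype E] (G : SeqGraph V E)
    (f : E → ℤ) (hf : G.IsFlow f) :
    ∃ (n : ℕ) (T : Fin n → G.CycleTraversal),
      (∀ k : Fin n, Even (T k).L) ∧
      f = ∑ k : Fin n, (T k).altFlow := by
  obtain ⟨n, T, hT, hsum⟩ := hf.isBalanced_conj.exists_sum_altWeight
  refine ⟨n, T, hT, ?_⟩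
  rw [← SeqGraph.conj_conj (G := G) f, hsum, SeqGraph.conj_sum]
  rfl

/-- On a connected sequence graph in which every vertex is incident to a
segment edge and to a bond edge, every integer flow is a finite sum of
alternating flows of even-length cycle traversals. -/
theorem stmt_8 (V E : Type) [Fintype V] [Fintype E] (G : SeqGraph V E)
    (hconn : G.Connected)
    (hseg : ∀ u : V, ∃ x : E, G.seg x ∧ u ∈ G.ends x)
    (hbond : ∀ u : V, ∃ x : E, ¬ G.seg x ∧ u ∈ G.ends x)
    (f : E → ℤ) (hf : G.IsFlow f) :
    ∃ (n : ℕ) (T : Fin n → G.CycleTraversal),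
      (∀ k : Fin n, Even (T k).L) ∧
      f = ∑ k : Fin n, (T k).altFlow :=
  stmt_8_general V E G f hf
end
end

section
/- On any sequence graph (with finite vertex and edge sets), the set of simple flows — integer flows arising as alternating flows of synchronized and nested even-length cycle traversals — is finite; equivalently, the set of nonzero minimal integer flows is finite. -/
open scoped Classical
open Finset

noncomputable section

/-!
Three indices cannot have pairwise odd differences, so a synchronized traversal visits each vertex
at most twice. Its length, and hence every coordinate of its alternating flow, is then at most
`2 |V|`, which leaves finitely many simple flows.

Nonzero minimal flows form an antichain for the conformal order (`f ⊑ g` iff each `f x` lies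
between `0` and `g x`), because `f ⊑ g` makes `g = f + (g - f)` an ℓ¹-additive splitting into
flows. The conformal order is a well-quasi-order by Dickson's lemma, so the antichain is finite.
-/

section Conformal

variable {ι : Type*}

/-- Comparing `posNegParts` pointwise is the conformal order on integer vectors: `f` lies below
`g` iff each `f i` lies between `0` and `g i`. -/
def posNegParts (f : ι → ℤ) : ι → ℕ × ℕ := fun i => ((f i).toNat, (-f i).toNat)

theorem wellQuasiOrdered_posNegParts_le [Finite ι] :
    WellQuasiOrdered fun f g : ι → ℤ => posNegParts f ≤ posNegParts g :=
  fun s => wellQuasiOrdered_le (posNegParts ∘ s)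

theorem abs_eq_abs_add_abs_sub_of_posNegParts_le {f g : ι → ℤ}
    (h : posNegParts f ≤ posNegParts g) (i : ι) : |g i| = |f i| + |g i - f i| := by
  obtain ⟨hpos, hneg⟩ := h i
  simp only [posNegParts] at hpos hneg
  rcases abs_cases (f i) with ⟨_, _⟩ | ⟨_, _⟩ <;> rcases abs_cases (g i) with ⟨_, _⟩ | ⟨_, _⟩ <;>
    rcases abs_cases (g i - f i) with ⟨_, _⟩ | ⟨_, _⟩ <;> omega

end Conformal

namespace SeqGraph

variable {V E : Type} {G : SeqGraph V E}

theorem l1_eq_l1_add_l1_sub_of_posNegParts_le [Fintype E] {f g : E → ℤ}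
    (h : posNegParts f ≤ posNegParts g) : l1 g = l1 f + l1 (g - f) := by
  simp only [l1, Pi.sub_apply, ← Finset.sum_add_distrib,
    abs_eq_abs_add_abs_sub_of_posNegParts_le h]

theorem IsFlow.sub [Fintype E] {f g : E → ℤ} (hf : G.IsFlow f) (hg : G.IsFlow g) :
    G.IsFlow (f - g) := by
  intro u
  have hfu := hf u
  have hgu := hg u
  simp only [Finset.sum_ite, Finset.sum_const_zero, add_zero, zero_add, Pi.sub_apply, mul_sub,
    Finset.sum_sub_distrib] at hfu hgu ⊢
  rw [hfu, hgu]

theorem isAntichain_minimalFlows [Fintype E] :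
    IsAntichain (fun f g : E → ℤ => posNegParts f ≤ posNegParts g)
      {f | G.IsFlow f ∧ f ≠ 0 ∧ G.MinimalFlow f} := by
  rintro f ⟨hf, hf0, -⟩ g ⟨hg, -, hg_min⟩ hfg hle
  exact hg_min ⟨f, g - f, hf, hg.sub hf, hf0, sub_ne_zero.mpr hfg.symm,
    (add_sub_cancel f g).symm, l1_eq_l1_add_l1_sub_of_posNegParts_le hle⟩

theorem abs_conj (g : E → ℤ) (x : E) : |G.conj g x| = |g x| := by
  unfold conj
  split_ifs <;> simp

namespace CycleTraversal

instance (t : G.CycleTraversal) : NeZero t.L := ⟨t.pos⟩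

theorem abs_altWeight_le (t : G.CycleTraversal) (x : E) : |t.altWeight x| ≤ t.L := by
  calc |t.altWeight x|
      ≤ ∑ i : ZMod t.L, |if t.e i = x then (-1 : ℤ) ^ i.val else 0| :=
        Finset.abs_sum_le_sum_abs (fun i => if t.e i = x then (-1 : ℤ) ^ i.val else 0) _
    _ ≤ ∑ _i : ZMod t.L, (1 : ℤ) := by
        gcongr with i
        split_ifs <;> simp
    _ = t.L := by simp [ZMod.card]

variable {t : G.CycleTraversal}

theorem Synchronized.card_fiber_le_two (hs : t.Synchronized) (a : V) : #{i | t.v i = a} ≤ 2 := by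
  by_contra! h
  obtain ⟨i, hi, j, hj, k, hk, hij, hik, hjk⟩ := Finset.two_lt_card.mp h
  simp only [Finset.mem_filter, Finset.mem_univ, true_and] at hi hj hk
  obtain ⟨_, _⟩ := hs i j hij (hi.trans hj.symm)
  obtain ⟨_, _⟩ := hs j k hjk (hj.trans hk.symm)
  obtain ⟨_, _⟩ := hs i k hik (hi.trans hk.symm)
  omega

theorem Synchronized.length_le [Fintype V] (hs : t.Synchronized) : t.L ≤ 2 * Fintype.card V :=
  calc t.L = #(Finset.univ : Finset (ZMod t.L)) := by simp [ZMod.card]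
    _ ≤ 2 * #(Finset.univ.image t.v) :=
        Finset.card_le_mul_card_image _ 2 fun a _ => hs.card_fiber_le_two a
    _ ≤ 2 * Fintype.card V := by gcongr; exact Finset.card_le_univ _

theorem Synchronized.abs_altFlow_le [Fintype V] (hs : t.Synchronized) (x : E) :
    |t.altFlow x| ≤ 2 * Fintype.card V := by
  rw [altFlow, abs_conj]
  exact (t.abs_altWeight_le x).trans (mod_cast hs.length_le)

end CycleTraversal

end SeqGraph

/-- On a sequence graph with finite vertex and edge sets, the set of simple
flows is finite; equivalently, the set of nonzero minimal integer flows is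
finite. -/
theorem stmt_16 (V E : Type) [Fintype V] [Fintype E] (G : SeqGraph V E) :
    {f : E → ℤ | ∃ t : G.CycleTraversal,
        Even t.L ∧ t.Synchronized ∧ t.Nested ∧ t.altFlow = f}.Finite ∧
      {f : E → ℤ | G.IsFlow f ∧ f ≠ 0 ∧ G.MinimalFlow f}.Finite := by
  refine ⟨?_, SeqGraph.isAntichain_minimalFlows.finite_of_wellQuasiOrdered
    wellQuasiOrdered_posNegParts_le⟩
  let B : ℤ := 2 * Fintype.card V
  refine (Set.Finite.pi fun _ : E => Set.finite_Icc (-B) B).subset ?_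
  rintro f ⟨t, -, hs, -, rfl⟩ x -
  exact abs_le.mp (hs.abs_altFlow_le x)
end
end
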